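/- arXiv:0808.0327 — 4 statements merged into one kernel-verified Lean document; each statement's English description precedes it below -/
import Mathlib

section
/- Let X be a real Hausdorff topological vector space with topological dual X*, let (ν_α)_{α∈A} be a net of Borel probability measures on X indexed by a directed set A, and let (t_α)_{α∈A} be a net of positive real numbers converging to 0. Assume (ν_α) is exponentially tight with respect to (t_α). Let E be the set of exposed points x of the Legendre–Fenchel transform L̄* for which there exists an exposing hyperplane λ_x ∈ X* such that the limit lim_α t_α log ∫_X exp(λ_x(y)/t_α) dν_α(y) exists in ℝ and such that L̄(c·λ_x) < +∞ for some c > 1. If inf_{x∈G} L̄*(x) = inf_{x∈G∩E} L̄*(x) for every open set G ⊆ X, then (ν_α) satisfies the large deviation principle with powers (t_α) and rate function L̄*. -/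
/-!
Upper bound: Chebyshev's inequality for a functional `l` bounds the measure of a half-space
`{l > b + q}` with `L̄(l) < q` by `exp(-b/t_α)`; finitely many such half-spaces cover a compact set on
which `L̄* > b`, and exponential tightness passes from compact to closed sets.

Lower bound at a point `x ∈ E` with exposing hyperplane `l`: the measures tilted by `exp(l/t_α)` stay
exponentially tight (because `L̄(c l) < ∞` for some `c > 1`) and their rate function vanishes only
at `x`, so by the upper bound they concentrate near `x`. Undoing the tilt on
`G ∩ {l < l(x) + δ}` gives `liminf t_α log ν_α(G) ≥ L̄(l) - l(x) - 2δ ≥ -L̄*(x) - 2δ`, and the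
hypothesis on `E` reduces the lower bound for `G` to such points.
-/

open MeasureTheory Filter Topology
open scoped ENNReal

/-- The large deviation functional `L̄(h) = limsup_α t_α log ∫ exp(h(x)/t_α) dν_α(x)`,
with values in the extended reals. -/
noncomputable def LDFunctional {X A : Type*} [MeasurableSpace X] [Preorder A]
    (ν : A → Measure X) (t : A → ℝ) (h : X → ℝ) : EReal :=
  Filter.limsup
    (fun α => (t α : EReal) *
      ENNReal.log (∫⁻ x, ENNReal.ofReal (Real.exp (h x / t α)) ∂(ν α))) Filter.atTop

/-- A net of Borel probability measures `ν` satisfies the large deviation principle with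
powers `t` and rate function `I` : `I` is `[0,+∞]`-valued, lower semicontinuous, and the
usual upper bound for closed sets and lower bound for open sets hold. -/
def HasLDP {X A : Type*} [TopologicalSpace X] [MeasurableSpace X] [Preorder A]
    (ν : A → Measure X) (t : A → ℝ) (I : X → EReal) : Prop :=
  (∀ x, 0 ≤ I x) ∧ LowerSemicontinuous I ∧
    (∀ F : Set X, IsClosed F →
      Filter.limsup (fun α => (t α : EReal) * ENNReal.log (ν α F)) Filter.atTop
        ≤ -(⨅ x ∈ F, I x)) ∧
    (∀ G : Set X, IsOpen G →
      -(⨅ x ∈ G, I x) ≤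
        Filter.liminf (fun α => (t α : EReal) * ENNReal.log (ν α G)) Filter.atTop)

namespace EReal

lemma coe_lt_coe_sub_iff {a b : ℝ} {L : EReal} :
    (b : EReal) < a - L ↔ L < ((a - b : ℝ) : EReal) := by
  induction L using EReal.rec <;> simp [← EReal.coe_sub, lt_sub_comm]

lemma coe_sub_lt_coe_iff {a b : ℝ} {L : EReal} :
    (a : EReal) - L < b ↔ ((a - b : ℝ) : EReal) < L := by
  induction L using EReal.rec <;> simp [← EReal.coe_sub, sub_lt_comm]

end EReal

section ScaledLog

variable {A : Type*}

noncomputable def scaledLog (t : A → ℝ) (w : A → ℝ≥0∞) (α : A) : EReal :=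
  (t α : EReal) * ENNReal.log (w α)

variable {t : A → ℝ} {w : A → ℝ≥0∞} {α : A} {d : ℝ}

lemma scaledLog_le_iff (ht : 0 < t α) :
    scaledLog t w α ≤ d ↔ w α ≤ ENNReal.ofReal (Real.exp (d / t α)) := by
  rw [scaledLog, mul_comm, ← EReal.le_div_iff_mul_le (by exact_mod_cast ht) (EReal.coe_ne_top _),
    ← EReal.coe_div, ← ENNReal.log_le_log_iff, ← EReal.exp_coe, EReal.log_exp]

lemma scaledLog_lt_iff (ht : 0 < t α) :
    scaledLog t w α < d ↔ w α < ENNReal.ofReal (Real.exp (d / t α)) := by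
  rw [scaledLog, mul_comm, ← EReal.lt_div_iff (by exact_mod_cast ht) (EReal.coe_ne_top _),
    ← EReal.coe_div, ← ENNReal.log_lt_log_iff, ← EReal.exp_coe, EReal.log_exp]

lemma le_scaledLog_iff (ht : 0 < t α) :
    (d : EReal) ≤ scaledLog t w α ↔ ENNReal.ofReal (Real.exp (d / t α)) ≤ w α := by
  rw [← not_lt, scaledLog_lt_iff ht, not_lt]

variable [Preorder A]

lemma tendsto_zero_of_limsup_scaledLog_lt_zero (htpos : ∀ α, 0 < t α)
    (htlim : Tendsto t atTop (𝓝 0)) (h : limsup (scaledLog t w) atTop < 0) :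
    Tendsto w atTop (𝓝 0) := by
  obtain ⟨η, hη, hη0⟩ := EReal.exists_between_coe_real h
  have hbound : ∀ᶠ α in atTop, w α ≤ ENNReal.ofReal (Real.exp (η / t α)) := by
    filter_upwards [eventually_lt_of_limsup_lt hη] with α hα
    exact ((scaledLog_lt_iff (htpos α)).1 hα).le
  have htinv : Tendsto (fun α => (t α)⁻¹) atTop atTop :=
    Tendsto.inv_tendsto_nhdsGT_zero (tendsto_nhdsWithin_iff.2 ⟨htlim, .of_forall htpos⟩)
  have hexp : Tendsto (fun α => ENNReal.ofReal (Real.exp (η / t α))) atTop (𝓝 0) := by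
    rw [← ENNReal.ofReal_zero]
    refine ENNReal.tendsto_ofReal (Real.tendsto_exp_atBot.comp ?_)
    simpa [div_eq_mul_inv] using htinv.const_mul_atTop_of_neg (by exact_mod_cast hη0)
  exact tendsto_of_tendsto_of_tendsto_of_le_of_le' tendsto_const_nhds hexp
    (.of_forall fun _ => zero_le) hbound

variable [IsDirected A (· ≤ ·)] [Nonempty A]

lemma limsup_scaledLog_le_of_eventually_le (htpos : ∀ α, 0 < t α)
    (htlim : Tendsto t atTop (𝓝 0)) {C : ℝ} (hC : 0 < C)
    (h : ∀ᶠ α in atTop, w α ≤ ENNReal.ofReal (C * Real.exp (d / t α))) :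
    limsup (scaledLog t w) atTop ≤ d := by
  have hbound : ∀ᶠ α in atTop, scaledLog t w α ≤ ((t α * Real.log C + d : ℝ) : EReal) := by
    filter_upwards [h] with α hα
    rwa [scaledLog_le_iff (htpos α), add_div, mul_div_cancel_left₀ _ (htpos α).ne', Real.exp_add,
      Real.exp_log hC]
  have hlim : Tendsto (fun α => t α * Real.log C + d) atTop (𝓝 d) := by
    simpa using (htlim.mul_const (Real.log C)).add_const d
  exact (limsup_le_limsup hbound).trans_eq (EReal.tendsto_coe.2 hlim).limsup_eq

lemma le_liminf_scaledLog_of_eventually_le (htpos : ∀ α, 0 < t α)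
    (htlim : Tendsto t atTop (𝓝 0)) {C : ℝ} (hC : 0 < C)
    (h : ∀ᶠ α in atTop, ENNReal.ofReal (C * Real.exp (d / t α)) ≤ w α) :
    (d : EReal) ≤ liminf (scaledLog t w) atTop := by
  have hbound : ∀ᶠ α in atTop, ((t α * Real.log C + d : ℝ) : EReal) ≤ scaledLog t w α := by
    filter_upwards [h] with α hα
    rwa [le_scaledLog_iff (htpos α), add_div, mul_div_cancel_left₀ _ (htpos α).ne', Real.exp_add,
      Real.exp_log hC]
  have hlim : Tendsto (fun α => t α * Real.log C + d) atTop (𝓝 d) := by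
    simpa using (htlim.mul_const (Real.log C)).add_const d
  exact (EReal.tendsto_coe.2 hlim).liminf_eq.symm.trans_le (liminf_le_liminf hbound)

lemma limsup_scaledLog_measure_le_of_subset_union {X : Type*} [MeasurableSpace X]
    (htpos : ∀ α, 0 < t α) (htlim : Tendsto t atTop (𝓝 0)) (μ : A → Measure X)
    {S S₁ S₂ : Set X} (hS : S ⊆ S₁ ∪ S₂) {a : EReal}
    (h₁ : limsup (scaledLog t fun α => μ α S₁) atTop ≤ a)
    (h₂ : limsup (scaledLog t fun α => μ α S₂) atTop ≤ a) :
    limsup (scaledLog t fun α => μ α S) atTop ≤ a := by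
  refine EReal.le_of_forall_lt_iff_le.1 fun d hd => ?_
  refine limsup_scaledLog_le_of_eventually_le htpos htlim two_pos ?_
  filter_upwards [eventually_lt_of_limsup_lt (h₁.trans_lt hd),
    eventually_lt_of_limsup_lt (h₂.trans_lt hd)] with α h₁α h₂α
  rw [scaledLog_lt_iff (htpos α)] at h₁α h₂α
  calc μ α S ≤ μ α S₁ + μ α S₂ := (measure_mono hS).trans (measure_union_le _ _)
    _ ≤ ENNReal.ofReal (Real.exp (d / t α)) + ENNReal.ofReal (Real.exp (d / t α)) :=
      add_le_add h₁α.le h₂α.le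
    _ = ENNReal.ofReal (2 * Real.exp (d / t α)) := by
      rw [two_mul, ENNReal.ofReal_add (Real.exp_nonneg _) (Real.exp_nonneg _)]

end ScaledLog

section ExpMoment

variable {A X : Type*} [MeasurableSpace X]

noncomputable def expMoment (ν : A → Measure X) (t : A → ℝ) (h : X → ℝ) (α : A) : ℝ≥0∞ :=
  ∫⁻ x, ENNReal.ofReal (Real.exp (h x / t α)) ∂(ν α)

lemma ldFunctional_eq [Preorder A] (ν : A → Measure X) (t : A → ℝ) (h : X → ℝ) :
    LDFunctional ν t h = limsup (scaledLog t (expMoment ν t h)) atTop := rfl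

lemma ldFunctional_zero [Preorder A] [IsDirected A (· ≤ ·)] [Nonempty A] (ν : A → Measure X)
    [∀ α, IsProbabilityMeasure (ν α)] (t : A → ℝ) : LDFunctional ν t 0 = 0 := by
  have h : scaledLog t (expMoment ν t 0) = fun _ => 0 := by
    funext α
    simp [scaledLog, expMoment]
  rw [ldFunctional_eq, h, limsup_const]

lemma measure_lt_le_exp_mul_lintegral (μ : Measure X) {h : X → ℝ} (hh : Measurable h)
    {s : ℝ} (hs : 0 < s) (c : ℝ) :
    μ {y | c < h y} ≤
      ENNReal.ofReal (Real.exp (-c / s)) * ∫⁻ y, ENNReal.ofReal (Real.exp (h y / s)) ∂μ := by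
  calc μ {y | c < h y}
      ≤ μ {y | ENNReal.ofReal (Real.exp (c / s)) ≤ ENNReal.ofReal (Real.exp (h y / s))} :=
        measure_mono fun y hy => ENNReal.ofReal_le_ofReal
          (Real.exp_le_exp.2 (div_le_div_of_nonneg_right (le_of_lt hy) hs.le))
    _ ≤ (∫⁻ y, ENNReal.ofReal (Real.exp (h y / s)) ∂μ) / ENNReal.ofReal (Real.exp (c / s)) :=
        meas_ge_le_lintegral_div (by fun_prop) (by simp [Real.exp_pos]) ENNReal.ofReal_ne_top
    _ = _ := by
        rw [div_eq_mul_inv, mul_comm, ← ENNReal.ofReal_inv_of_pos (Real.exp_pos _),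
          ← Real.exp_neg, neg_div]

end ExpMoment

section Legendre

variable {X : Type*} [AddCommGroup X] [Module ℝ X] [TopologicalSpace X]

noncomputable def legendre (Λ : (X →L[ℝ] ℝ) → EReal) (x : X) : EReal :=
  ⨆ l : X →L[ℝ] ℝ, (l x : EReal) - Λ l

def IsExposingHyperplane (I : X → EReal) (x : X) (l : X →L[ℝ] ℝ) : Prop :=
  ∀ y, y ≠ x → (l y : EReal) - I y < (l x : EReal) - I x

variable (Λ : (X →L[ℝ] ℝ) → EReal)

lemma sub_le_legendre (l : X →L[ℝ] ℝ) (x : X) : (l x : EReal) - Λ l ≤ legendre Λ x :=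
  le_iSup (fun l : X →L[ℝ] ℝ => (l x : EReal) - Λ l) l

lemma legendre_nonneg (h0 : Λ 0 ≤ 0) (x : X) : 0 ≤ legendre Λ x :=
  le_trans (by simpa using h0) (sub_le_legendre Λ 0 x)

lemma lowerSemicontinuous_legendre : LowerSemicontinuous (legendre Λ) := by
  refine lowerSemicontinuous_iSup fun l => ?_
  generalize Λ l = c
  induction c using EReal.rec with
  | bot => simpa using lowerSemicontinuous_const
  | coe c =>
    simp_rw [← EReal.coe_sub]
    exact (continuous_coe_real_ereal.comp (l.continuous.sub continuous_const)).lowerSemicontinuous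
  | top => simpa using lowerSemicontinuous_const

end Legendre

section UpperBound

variable {A X : Type*} [Preorder A] [IsDirected A (· ≤ ·)] [Nonempty A]
  [AddCommGroup X] [Module ℝ X] [TopologicalSpace X] [MeasurableSpace X]
  {μ : A → Measure X} {t : A → ℝ}

def IsExpTight (μ : A → Measure X) (t : A → ℝ) : Prop :=
  ∀ M : ℝ, ∃ K : Set X, IsCompact K ∧ limsup (scaledLog t fun α => μ α Kᶜ) atTop < M

lemma limsup_scaledLog_measure_le_of_isCompact [OpensMeasurableSpace X]
    (htpos : ∀ α, 0 < t α) (htlim : Tendsto t atTop (𝓝 0)) {K : Set X} (hK : IsCompact K)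
    {b : ℝ} (hb : ∀ x ∈ K, (b : EReal) < legendre (fun l => LDFunctional μ t l) x) :
    limsup (scaledLog t fun α => μ α K) atTop ≤ ((-b : ℝ) : EReal) := by
  have key : ∀ x ∈ K, ∃ (l : X →L[ℝ] ℝ) (q : ℝ), LDFunctional μ t l < q ∧ b + q < l x := by
    intro x hx
    obtain ⟨l, hl⟩ := lt_iSup_iff.1 (hb x hx)
    obtain ⟨q, hLq, hqx⟩ := EReal.exists_between_coe_real (EReal.coe_lt_coe_sub_iff.1 hl)
    exact ⟨l, q, hLq, by linarith [EReal.coe_lt_coe_iff.1 hqx]⟩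
  choose! l q hLq hql using key
  obtain ⟨s, hsK, hKs⟩ := hK.elim_nhds_subcover (fun x => {y | b + q x < l x y})
    fun x hx => (isOpen_lt continuous_const (l x).continuous).mem_nhds (hql x hx)
  have hhalfspace : ∀ x ∈ s, ∀ᶠ α in atTop,
      μ α {y | b + q x < l x y} ≤ ENNReal.ofReal (Real.exp (-b / t α)) := by
    intro x hx
    filter_upwards [eventually_lt_of_limsup_lt (hLq x (hsK x hx))] with α hα
    calc μ α {y | b + q x < l x y}
        ≤ ENNReal.ofReal (Real.exp (-(b + q x) / t α)) * expMoment μ t (l x) α :=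
          measure_lt_le_exp_mul_lintegral _ (l x).continuous.measurable (htpos α) _
      _ ≤ ENNReal.ofReal (Real.exp (-(b + q x) / t α)) *
            ENNReal.ofReal (Real.exp (q x / t α)) := by
          gcongr
          exact ((scaledLog_lt_iff (w := expMoment μ t (l x)) (htpos α)).1 hα).le
      _ = ENNReal.ofReal (Real.exp (-b / t α)) := by
          rw [← ENNReal.ofReal_mul (Real.exp_nonneg _), ← Real.exp_add]
          ring_nf
  refine limsup_scaledLog_le_of_eventually_le htpos htlim (C := s.card + 1) (by positivity) ?_
  filter_upwards [(eventually_all_finset s).2 hhalfspace] with α hα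
  calc μ α K ≤ ∑ x ∈ s, μ α {y | b + q x < l x y} :=
        (measure_mono hKs).trans (measure_biUnion_finset_le s _)
    _ ≤ s.card • ENNReal.ofReal (Real.exp (-b / t α)) := Finset.sum_le_card_nsmul _ _ _ hα
    _ ≤ ENNReal.ofReal ((s.card + 1) * Real.exp (-b / t α)) := by
        rw [nsmul_eq_mul, ← ENNReal.ofReal_natCast, ← ENNReal.ofReal_mul (Nat.cast_nonneg _)]
        gcongr
        linarith

lemma limsup_scaledLog_measure_le_of_isClosed [OpensMeasurableSpace X]
    (htpos : ∀ α, 0 < t α) (htlim : Tendsto t atTop (𝓝 0)) (htight : IsExpTight μ t)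
    {F : Set X} (hF : IsClosed F) :
    limsup (scaledLog t fun α => μ α F) atTop ≤
      -⨅ x ∈ F, legendre (fun l => LDFunctional μ t l) x := by
  refine EReal.le_of_forall_lt_iff_le.1 fun d hd => ?_
  obtain ⟨K, hK, hKd⟩ := htight d
  refine limsup_scaledLog_measure_le_of_subset_union htpos htlim μ (S₁ := F ∩ K)
    (fun y hy => (em (y ∈ K)).imp (⟨hy, ·⟩) id) ?_ hKd.le
  have hdF : ((-d : ℝ) : EReal) < ⨅ x ∈ F, legendre (fun l => LDFunctional μ t l) x := by
    rwa [EReal.coe_neg, EReal.neg_lt_comm]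
  simpa using limsup_scaledLog_measure_le_of_isCompact htpos htlim (hK.inter_left hF)
    fun y hy => hdF.trans_le (iInf₂_le y hy.1)

end UpperBound

section Tilt

variable {A X : Type*} [MeasurableSpace X] {ν : A → Measure X} {t : A → ℝ} {l : X → ℝ}

noncomputable def tilt (ν : A → Measure X) (t : A → ℝ) (l : X → ℝ) (α : A) : Measure X :=
  (expMoment ν t l α)⁻¹ • (ν α).withDensity fun y => ENNReal.ofReal (Real.exp (l y / t α))

lemma tilt_apply (α : A) [SFinite (ν α)] (S : Set X) :
    tilt ν t l α S =
      (expMoment ν t l α)⁻¹ * ∫⁻ y in S, ENNReal.ofReal (Real.exp (l y / t α)) ∂(ν α) := by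
  simp [tilt, withDensity_apply']

lemma isProbabilityMeasure_tilt (hl : Measurable l) {α : A} [IsProbabilityMeasure (ν α)]
    (hZ : expMoment ν t l α ≠ ⊤) : IsProbabilityMeasure (tilt ν t l α) := by
  constructor
  rw [tilt_apply, Measure.restrict_univ]
  refine ENNReal.inv_mul_cancel (ne_of_gt ((lintegral_pos_iff_support (by fun_prop)).2 ?_)) hZ
  simp [Function.support, Real.exp_pos]

lemma expMoment_tilt (hl : Measurable l) {h : X → ℝ} (hh : Measurable h) (α : A) :
    expMoment (tilt ν t l) t h α = (expMoment ν t l α)⁻¹ * expMoment ν t (h + l) α := by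
  rw [expMoment, tilt, lintegral_smul_measure,
    lintegral_withDensity_eq_lintegral_mul _ (by fun_prop) (by fun_prop), smul_eq_mul, expMoment]
  congr 1
  refine lintegral_congr fun y => ?_
  simp [← ENNReal.ofReal_mul (Real.exp_nonneg _), ← Real.exp_add, add_div, add_comm]

lemma ldFunctional_tilt_le [Preorder A] [IsDirected A (· ≤ ·)] [Nonempty A] (hl : Measurable l)
    (htpos : ∀ α, 0 < t α) {r : ℝ} (hr : Tendsto (scaledLog t (expMoment ν t l)) atTop (𝓝 r))
    {h : X → ℝ} (hh : Measurable h) :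
    LDFunctional (tilt ν t l) t h ≤ ((-r : ℝ) : EReal) + LDFunctional ν t (h + l) := by
  have hsplit : scaledLog t (expMoment (tilt ν t l) t h) =
      -scaledLog t (expMoment ν t l) + scaledLog t (expMoment ν t (h + l)) := by
    funext α
    simp only [scaledLog, expMoment_tilt hl hh, ENNReal.log_mul_add, ENNReal.log_inv,
      Pi.add_apply, Pi.neg_apply]
    rw [EReal.left_distrib_of_nonneg_of_ne_top (by exact_mod_cast (htpos α).le)
      (EReal.coe_ne_top _), mul_neg]
  have hneg : limsup (-scaledLog t (expMoment ν t l)) atTop = ((-r : ℝ) : EReal) := by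
    rw [EReal.limsup_neg, hr.liminf_eq, EReal.coe_neg]
  rw [ldFunctional_eq, hsplit, ldFunctional_eq, ← hneg]
  exact EReal.limsup_add_le (.inl (hneg ▸ EReal.coe_ne_bot _)) (.inl (hneg ▸ EReal.coe_ne_top _))

lemma setLIntegral_le_lintegral_rpow_mul_measure_rpow {μ : Measure X} {f : X → ℝ≥0∞}
    (hf : AEMeasurable f μ) {p q : ℝ} (hpq : p.HolderConjugate q) (S : Set X) :
    ∫⁻ x in S, f x ∂μ ≤ (∫⁻ x, f x ^ p ∂μ) ^ (1 / p) * μ S ^ (1 / q) := by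
  have hHolder := ENNReal.lintegral_mul_le_Lp_mul_Lq (μ.restrict S) hpq hf.restrict
    (aemeasurable_const (b := (1 : ℝ≥0∞)))
  simp only [Pi.mul_apply, mul_one, ENNReal.one_rpow, lintegral_const,
    Measure.restrict_apply_univ, one_mul] at hHolder
  refine hHolder.trans ?_
  have := hpq.pos
  gcongr
  exact Measure.restrict_le_self

lemma tilt_le_expMoment_rpow_mul_measure_rpow (hl : Measurable l) (α : A) [SFinite (ν α)]
    {c q : ℝ} (hcq : c.HolderConjugate q) (S : Set X) :
    tilt ν t l α S ≤ (expMoment ν t l α)⁻¹ *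
      (expMoment ν t (fun y => c * l y) α ^ (1 / c) * ν α S ^ (1 / q)) := by
  rw [tilt_apply]
  gcongr
  refine (setLIntegral_le_lintegral_rpow_mul_measure_rpow (by fun_prop) hcq S).trans_eq ?_
  congr 3
  funext y
  rw [ENNReal.ofReal_rpow_of_pos (Real.exp_pos _), ← Real.exp_mul]
  ring_nf

/-- The tail bound comes from Hölder's inequality with exponents `c` and `c/(c-1)`. -/
lemma isExpTight_tilt [TopologicalSpace X] [Preorder A] [∀ α, SFinite (ν α)] (hl : Measurable l)
    (htpos : ∀ α, 0 < t α) (htight : IsExpTight ν t) {r : ℝ}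
    (hr : Tendsto (scaledLog t (expMoment ν t l)) atTop (𝓝 r)) {c : ℝ} (hc : 1 < c)
    (hcl : LDFunctional ν t (fun y => c * l y) < ⊤) : IsExpTight (tilt ν t l) t := by
  intro M
  obtain ⟨m, hm, -⟩ := EReal.exists_between_coe_real hcl
  rw [ldFunctional_eq] at hm
  obtain ⟨q, hcq⟩ : ∃ q, c.HolderConjugate q := ⟨_, .conjExponent hc⟩
  -- the tail level for `ν` is chosen so that the exponents below add up to `M - 1`
  obtain ⟨K, hK, hKM⟩ := htight (q * (M - 2 + r - m / c))
  refine ⟨K, hK, lt_of_le_of_lt (limsup_le_of_le (a := ((M - 1 : ℝ) : EReal)) ?_ ?_)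
    (by exact_mod_cast sub_one_lt M)⟩
  · isBoundedDefault
  have hZ := hr.eventually (eventually_gt_nhds (show ((r - 1 : ℝ) : EReal) < r by
    exact_mod_cast sub_one_lt r))
  filter_upwards [eventually_lt_of_limsup_lt hm, eventually_lt_of_limsup_lt hKM, hZ]
    with α hmα hKα hZα
  have ht := htpos α
  rw [scaledLog_lt_iff ht] at hmα hKα
  replace hZα := (le_scaledLog_iff ht).1 hZα.le
  rw [scaledLog_le_iff ht]
  calc tilt ν t l α Kᶜ
      ≤ (expMoment ν t l α)⁻¹ *
          (expMoment ν t (fun y => c * l y) α ^ (1 / c) * ν α Kᶜ ^ (1 / q)) :=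
        tilt_le_expMoment_rpow_mul_measure_rpow hl α hcq Kᶜ
    _ ≤ (ENNReal.ofReal (Real.exp ((r - 1) / t α)))⁻¹ *
          ((ENNReal.ofReal (Real.exp (m / t α))) ^ (1 / c) *
            (ENNReal.ofReal (Real.exp (q * (M - 2 + r - m / c) / t α))) ^ (1 / q)) := by
        have := hcq.one_div_nonneg
        have := hcq.symm.one_div_nonneg
        gcongr
    _ = ENNReal.ofReal (Real.exp ((M - 1 : ℝ) / t α)) := by
        simp only [ENNReal.ofReal_rpow_of_pos (Real.exp_pos _), ← Real.exp_mul,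
          ← ENNReal.ofReal_inv_of_pos (Real.exp_pos _), ← Real.exp_neg,
          ← ENNReal.ofReal_mul (Real.exp_nonneg _), ← Real.exp_add]
        congr 2
        field_simp [hcq.ne_zero, hcq.symm.ne_zero]
        ring

lemma expMoment_mul_tilt_le {α : A} [SFinite (ν α)] (ht : 0 < t α) {S : Set X}
    (hS : MeasurableSet S) {a : ℝ} (hla : ∀ y ∈ S, l y ≤ a) :
    expMoment ν t l α * tilt ν t l α S ≤ ENNReal.ofReal (Real.exp (a / t α)) * ν α S := by
  rw [tilt_apply, ← mul_assoc, ← setLIntegral_const]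
  calc expMoment ν t l α * (expMoment ν t l α)⁻¹ *
        ∫⁻ y in S, ENNReal.ofReal (Real.exp (l y / t α)) ∂(ν α)
      ≤ 1 * ∫⁻ y in S, ENNReal.ofReal (Real.exp (l y / t α)) ∂(ν α) := by
        gcongr
        exact ENNReal.mul_inv_le_one _
    _ ≤ ∫⁻ _ in S, ENNReal.ofReal (Real.exp (a / t α)) ∂(ν α) := by
        rw [one_mul]
        refine setLIntegral_mono' hS fun y hy => ?_
        gcongr
        exact hla y hy

end Tilt

lemma LowerSemicontinuous.exists_pos_lt_of_isCompact {X : Type*} [TopologicalSpace X]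
    {f : X → EReal} (hf : LowerSemicontinuous f) {K : Set X} (hK : IsCompact K)
    (hpos : ∀ y ∈ K, 0 < f y) : ∃ η : ℝ, 0 < η ∧ ∀ y ∈ K, η < f y := by
  rcases K.eq_empty_or_nonempty with rfl | hne
  · exact ⟨1, one_pos, by simp⟩
  obtain ⟨y₀, hy₀, hmin⟩ := (hf.lowerSemicontinuousOn K).exists_isMinOn hne hK
  obtain ⟨η, hη, hηy⟩ := EReal.exists_between_coe_real (hpos y₀ hy₀)
  exact ⟨η, by exact_mod_cast hη, fun y hy => hηy.trans_le (hmin hy)⟩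

section LowerBound

variable {A X : Type*} [Preorder A] [IsDirected A (· ≤ ·)] [Nonempty A]
  [AddCommGroup X] [Module ℝ X] [TopologicalSpace X] [MeasurableSpace X]
  {ν : A → Measure X} {t : A → ℝ} {l : X →L[ℝ] ℝ} {r : ℝ} {x : X}

lemma coe_sub_le_legendre_of_tendsto (hr : Tendsto (scaledLog t (expMoment ν t l)) atTop (𝓝 r))
    (x : X) : ((l x - r : ℝ) : EReal) ≤ legendre (fun l => LDFunctional ν t l) x := by
  have h := sub_le_legendre (fun l => LDFunctional ν t l) l x
  rwa [ldFunctional_eq, hr.limsup_eq, ← EReal.coe_sub] at h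

variable [OpensMeasurableSpace X]

/-- The Legendre transform of the tilted net dominates `L̄*(y) - l(y) + L̄(l)`, which vanishes only
at `x`. -/
lemma legendre_tilt_pos (htpos : ∀ α, 0 < t α)
    (hr : Tendsto (scaledLog t (expMoment ν t l)) atTop (𝓝 r))
    (hexp : IsExposingHyperplane (legendre fun l => LDFunctional ν t l) x l)
    {y : X} (hy : y ≠ x) : 0 < legendre (fun l' => LDFunctional (tilt ν t l) t l') y := by
  have hly : ((l y - r : ℝ) : EReal) < legendre (fun l => LDFunctional ν t l) y := by
    refine EReal.coe_sub_lt_coe_iff.1 ((hexp y hy).trans_le ?_)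
    calc (l x : EReal) - legendre (fun l => LDFunctional ν t l) x
        ≤ (l x : EReal) - ((l x - r : ℝ) : EReal) :=
          EReal.sub_le_sub le_rfl (coe_sub_le_legendre_of_tendsto hr x)
      _ = r := by rw [← EReal.coe_sub, sub_sub_cancel]
  obtain ⟨l₀, hl₀⟩ := lt_iSup_iff.1 hly
  rw [EReal.coe_lt_coe_sub_iff] at hl₀
  refine lt_iSup_iff.2 ⟨l₀ - l, ?_⟩
  have htilt := ldFunctional_tilt_le l.continuous.measurable htpos hr
    (l₀ - l).continuous.measurable
  rw [show ⇑(l₀ - l) + ⇑l = ⇑l₀ by ext; simp] at htilt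
  refine EReal.sub_pos.2 ?_
  calc LDFunctional (tilt ν t l) t (l₀ - l)
      ≤ ((-r : ℝ) : EReal) + LDFunctional ν t l₀ := htilt
    _ < ((-r : ℝ) : EReal) + ((l₀ y - (l y - r) : ℝ) : EReal) := EReal.add_lt_add_left_coe hl₀ _
    _ = ((l₀ - l) y : EReal) := by
        rw [← EReal.coe_add, sub_apply]
        ring_nf

lemma tendsto_tilt_compl_zero [∀ α, IsProbabilityMeasure (ν α)] (htpos : ∀ α, 0 < t α)
    (htlim : Tendsto t atTop (𝓝 0)) (htight : IsExpTight ν t)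
    (hexp : IsExposingHyperplane (legendre fun l => LDFunctional ν t l) x l)
    (hr : Tendsto (scaledLog t (expMoment ν t l)) atTop (𝓝 r)) {c : ℝ} (hc : 1 < c)
    (hcl : LDFunctional ν t (fun y => c * l y) < ⊤) {U : Set X} (hU : IsOpen U) (hxU : x ∈ U) :
    Tendsto (fun α => tilt ν t l α Uᶜ) atTop (𝓝 0) := by
  obtain ⟨K, hK, hKtail⟩ := isExpTight_tilt l.continuous.measurable htpos htight hr hc hcl (-1)
  have hKU : IsCompact (K ∩ Uᶜ) := hK.inter_right hU.isClosed_compl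
  obtain ⟨η, hη, hηK⟩ := (lowerSemicontinuous_legendre _).exists_pos_lt_of_isCompact hKU
    fun y hy => legendre_tilt_pos htpos hr hexp fun h => hy.2 (h ▸ hxU)
  refine tendsto_zero_of_limsup_scaledLog_lt_zero htpos htlim
    (lt_of_le_of_lt (b := ((-min η 1 : ℝ) : EReal)) ?_ (by simpa using lt_min hη one_pos))
  refine limsup_scaledLog_measure_le_of_subset_union htpos htlim _ (S₁ := K ∩ Uᶜ) (S₂ := Kᶜ)
    (fun y hy => (em (y ∈ K)).imp (⟨·, hy⟩) id) ?_ ?_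
  · exact (limsup_scaledLog_measure_le_of_isCompact htpos htlim hKU hηK).trans
      (by exact_mod_cast neg_le_neg (min_le_left η 1))
  · exact hKtail.le.trans (by exact_mod_cast neg_le_neg (min_le_right η 1))

lemma tendsto_tilt_one [∀ α, IsProbabilityMeasure (ν α)] (htpos : ∀ α, 0 < t α)
    (htlim : Tendsto t atTop (𝓝 0)) (htight : IsExpTight ν t)
    (hexp : IsExposingHyperplane (legendre fun l => LDFunctional ν t l) x l)
    (hr : Tendsto (scaledLog t (expMoment ν t l)) atTop (𝓝 r)) {c : ℝ} (hc : 1 < c)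
    (hcl : LDFunctional ν t (fun y => c * l y) < ⊤) {U : Set X} (hU : IsOpen U) (hxU : x ∈ U) :
    Tendsto (fun α => tilt ν t l α U) atTop (𝓝 1) := by
  have hcompl := tendsto_tilt_compl_zero htpos htlim htight hexp hr hc hcl hU hxU
  have hsub := ENNReal.Tendsto.sub tendsto_const_nhds hcompl (.inl ENNReal.one_ne_top)
  rw [tsub_zero] at hsub
  refine (tendsto_congr' ?_).2 hsub
  filter_upwards [hr.eventually (eventually_lt_nhds (EReal.coe_lt_coe_iff.2 (lt_add_one r)))]
    with α hα
  have := isProbabilityMeasure_tilt (t := t) l.continuous.measurable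
    ((scaledLog_lt_iff (htpos α)).1 hα).ne_top
  rw [← prob_compl_eq_one_sub hU.measurableSet.compl, compl_compl]


lemma neg_legendre_le_liminf_scaledLog_of_exposed [∀ α, IsProbabilityMeasure (ν α)]
    (htpos : ∀ α, 0 < t α) (htlim : Tendsto t atTop (𝓝 0)) (htight : IsExpTight ν t)
    (hexp : IsExposingHyperplane (legendre fun l => LDFunctional ν t l) x l)
    (hr : Tendsto (scaledLog t (expMoment ν t l)) atTop (𝓝 r)) {c : ℝ} (hc : 1 < c)
    (hcl : LDFunctional ν t (fun y => c * l y) < ⊤) {G : Set X} (hG : IsOpen G) (hxG : x ∈ G) :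
    -legendre (fun l => LDFunctional ν t l) x ≤ liminf (scaledLog t fun α => ν α G) atTop := by
  refine le_trans (b := ((r - l x : ℝ) : EReal)) ?_ ?_
  · rw [EReal.neg_le, ← EReal.coe_neg, neg_sub]
    exact coe_sub_le_legendre_of_tendsto hr x
  refine EReal.ge_of_forall_gt_iff_ge.1 fun z hz => ?_
  set δ := (r - l x - z) / 2
  have hδ : 0 < δ := half_pos (sub_pos.2 (by exact_mod_cast hz))
  set U := G ∩ {y | l y < l x + δ}
  have hU : IsOpen U := hG.inter (isOpen_lt l.continuous continuous_const)
  have hUhalf := (tendsto_order.1 (tendsto_tilt_one htpos htlim htight hexp hr hc hcl hU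
    ⟨hxG, lt_add_of_pos_right _ hδ⟩)).1 2⁻¹ (by norm_num)
  have hZ : ∀ᶠ α in atTop, ENNReal.ofReal (Real.exp ((r - δ) / t α)) ≤ expMoment ν t l α := by
    filter_upwards [hr.eventually (eventually_gt_nhds (show ((r - δ : ℝ) : EReal) < r by
      exact_mod_cast sub_lt_self r hδ))] with α hα
    exact (le_scaledLog_iff (htpos α)).1 hα.le
  refine le_liminf_scaledLog_of_eventually_le htpos htlim (C := 2⁻¹) (by norm_num) ?_
  filter_upwards [hUhalf, hZ] with α hαU hαZ
  calc ENNReal.ofReal (2⁻¹ * Real.exp (z / t α))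
      = ENNReal.ofReal (Real.exp (-(l x + δ) / t α)) *
          (ENNReal.ofReal (Real.exp ((r - δ) / t α)) * 2⁻¹) := by
        rw [← ENNReal.ofReal_ofNat 2, ← ENNReal.ofReal_inv_of_pos two_pos,
          ← ENNReal.ofReal_mul (Real.exp_nonneg _), ← ENNReal.ofReal_mul (Real.exp_nonneg _),
          ← mul_assoc, mul_comm _ (2⁻¹ : ℝ), ← Real.exp_add]
        congr 3
        field_simp
        ring
    _ ≤ ENNReal.ofReal (Real.exp (-(l x + δ) / t α)) *
          (expMoment ν t l α * tilt ν t l α U) := by gcongr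
    _ ≤ ENNReal.ofReal (Real.exp (-(l x + δ) / t α)) *
          (ENNReal.ofReal (Real.exp ((l x + δ) / t α)) * ν α U) := by
        gcongr _ * ?_
        exact expMoment_mul_tilt_le (htpos α) hU.measurableSet fun y hy => hy.2.le
    _ = ν α U := by
        rw [← mul_assoc, ← ENNReal.ofReal_mul (Real.exp_nonneg _), ← Real.exp_add, neg_div,
          neg_add_cancel, Real.exp_zero, ENNReal.ofReal_one, one_mul]
    _ ≤ ν α G := measure_mono Set.inter_subset_left

end LowerBound

theorem baldi_theorem_general
    {X : Type*} [AddCommGroup X] [Module ℝ X] [TopologicalSpace X]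
    [MeasurableSpace X] [BorelSpace X]
    {A : Type*} [Preorder A] [IsDirected A (· ≤ ·)] [Nonempty A]
    (ν : A → Measure X) (hprob : ∀ α, IsProbabilityMeasure (ν α))
    (t : A → ℝ) (htpos : ∀ α, 0 < t α) (htlim : Tendsto t atTop (𝓝 0))
    (htight : ∀ M : ℝ, ∃ K : Set X, IsCompact K ∧
      Filter.limsup (fun α => (t α : EReal) * ENNReal.log (ν α Kᶜ)) Filter.atTop
        < (M : EReal))
    (Lstar : X → EReal)
    (hLstar : ∀ x, Lstar x = ⨆ l : X →L[ℝ] ℝ, ((l x : EReal) - LDFunctional ν t l))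
    (E : Set X)
    (hE : ∀ x, x ∈ E ↔ ∃ l : X →L[ℝ] ℝ,
      (∀ y, y ≠ x → (l y : EReal) - Lstar y < (l x : EReal) - Lstar x) ∧
      (∃ r : ℝ, Tendsto
        (fun α => (t α : EReal) *
          ENNReal.log (∫⁻ y, ENNReal.ofReal (Real.exp (l y / t α)) ∂(ν α)))
        atTop (𝓝 (r : EReal))) ∧
      (∃ c : ℝ, 1 < c ∧ LDFunctional ν t (fun y => c * l y) < ⊤))
    (hinf : ∀ G : Set X, IsOpen G → (⨅ x ∈ G, Lstar x) = ⨅ x ∈ G ∩ E, Lstar x) :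
    HasLDP ν t Lstar := by
  obtain rfl : Lstar = legendre (fun l => LDFunctional ν t l) := funext hLstar
  refine ⟨legendre_nonneg _ (by simp [ldFunctional_zero]), lowerSemicontinuous_legendre _,
    fun F hF => limsup_scaledLog_measure_le_of_isClosed htpos htlim htight hF, fun G hG => ?_⟩
  rw [hinf G hG, EReal.neg_le]
  refine le_iInf₂ fun x hx => EReal.neg_le.1 ?_
  obtain ⟨l, hexp, ⟨r, hr⟩, ⟨c, hc, hcl⟩⟩ := (hE x).1 hx.2
  exact neg_legendre_le_liminf_scaledLog_of_exposed htpos htlim htight hexp hr hc hcl hG hx.1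

/-- **Baldi's theorem.** Let `X` be a real Hausdorff topological vector space, `ν` a net of
Borel probability measures on `X` indexed by a directed set `A`, and `t` a net of positive
reals converging to `0`, such that `ν` is exponentially tight with respect to `t`.
Let `Lstar` be the Legendre–Fenchel transform of the restriction of the large deviation
functional to the topological dual, and let `E` be the set of exposed points `x` of `Lstar`
admitting an exposing hyperplane `l` such that `lim_α t_α log ∫ exp(l(y)/t_α) dν_α(y)`
exists in `ℝ` and `L̄(c·l) < +∞` for some `c > 1`.  If `inf_G Lstar = inf_{G ∩ E} Lstar`
for every open `G ⊆ X`, then `ν` satisfies the large deviation principle with powers `t`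
and rate function `Lstar`. -/
theorem baldi_theorem
    {X : Type*} [AddCommGroup X] [Module ℝ X] [TopologicalSpace X]
    [IsTopologicalAddGroup X] [ContinuousSMul ℝ X] [T2Space X]
    [MeasurableSpace X] [BorelSpace X]
    {A : Type*} [Preorder A] [IsDirected A (· ≤ ·)] [Nonempty A]
    (ν : A → Measure X) (hprob : ∀ α, IsProbabilityMeasure (ν α))
    (t : A → ℝ) (htpos : ∀ α, 0 < t α) (htlim : Tendsto t atTop (𝓝 0))
    (htight : ∀ M : ℝ, ∃ K : Set X, IsCompact K ∧
      Filter.limsup (fun α => (t α : EReal) * ENNReal.log (ν α Kᶜ)) Filter.atTop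
        < (M : EReal))
    (Lstar : X → EReal)
    (hLstar : ∀ x, Lstar x = ⨆ l : X →L[ℝ] ℝ, ((l x : EReal) - LDFunctional ν t l))
    (E : Set X)
    (hE : ∀ x, x ∈ E ↔ ∃ l : X →L[ℝ] ℝ,
      (∀ y, y ≠ x → (l y : EReal) - Lstar y < (l x : EReal) - Lstar x) ∧
      (∃ r : ℝ, Tendsto
        (fun α => (t α : EReal) *
          ENNReal.log (∫⁻ y, ENNReal.ofReal (Real.exp (l y / t α)) ∂(ν α)))
        atTop (𝓝 (r : EReal))) ∧
      (∃ c : ℝ, 1 < c ∧ LDFunctional ν t (fun y => c * l y) < ⊤))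
    (hinf : ∀ G : Set X, IsOpen G → (⨅ x ∈ G, Lstar x) = ⨅ x ∈ G ∩ E, Lstar x) :
    HasLDP ν t Lstar :=
  baldi_theorem_general ν hprob t htpos htlim htight Lstar hLstar E hE hinf
end

section
/- Let Ω be a compact metric space, let C(Ω) be the Banach space of real-valued continuous functions on Ω with the supremum norm, and let P(Ω) be the space of Borel probability measures on Ω with the weak* topology. Let (ν_α)_{α∈A} be a net of Borel probability measures on P(Ω) and (t_α)_{α∈A} a net of positive reals converging to 0. Let Q : C(Ω) → ℝ be convex and continuous for the supremum norm, and suppose there is a dense subset C ⊆ C(Ω) such that for every g ∈ C, limsup_α t_α log ∫_{P(Ω)} exp(μ(g)/t_α) dν_α(μ) ≤ Q(g). Then for every closed set F ⊆ P(Ω), limsup_α t_α log ν_α(F) ≤ −inf_{μ∈F} Q*(μ), where Q*(μ) = sup_{g∈C(Ω)} (μ(g) − Q(g)). -/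
open MeasureTheory Filter Topology
open scoped ENNReal

/-! If `t log ∫ exp (μ(g) / t) dν ≲ Q g`, then by the exponential Chebyshev inequality the
open set `{μ | μ(g) > L + Q g}` has `ν`-measure of exponential rate at most `-L`. When
`L < inf_F Q*`, every `μ ∈ F` lies in such a set for some `g ∈ C`, by density of `C` and
continuity of `Q`; compactness of `P(Ω)` leaves finitely many of them, and a union of `n`
sets has the rate of the worst one because `t log n → 0`. -/

theorem mul_log_le_coe_iff {t : ℝ} (ht : 0 < t) {x : ℝ≥0∞} {b : ℝ} :
    (t : EReal) * ENNReal.log x ≤ b ↔ x ≤ ENNReal.ofReal (Real.exp (b / t)) := by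
  rw [mul_comm, ← EReal.le_div_iff_mul_le (by exact_mod_cast ht) (EReal.coe_ne_top t),
    ← EReal.coe_div, ← ENNReal.log_le_log_iff, ENNReal.log_ofReal_of_pos (Real.exp_pos _),
    Real.log_exp]

theorem limsup_le_of_forall_coe_gt {ι : Type*} {l : Filter ι} {f : ι → EReal} {b : EReal}
    (h : ∀ c : ℝ, b < c → ∀ᶠ i in l, f i ≤ c) : limsup f l ≤ b :=
  EReal.le_of_forall_lt_iff_le.mp fun c hc => limsup_le_of_le (by isBoundedDefault) (h c hc)

theorem mul_log_measure_lt_le {X : Type*} [MeasurableSpace X] {ν : Measure X} {φ : X → ℝ}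
    (hφ : AEMeasurable φ ν) {t : ℝ} (ht : 0 < t) {q : ℝ}
    (h : (t : EReal) * ENNReal.log (∫⁻ x, ENNReal.ofReal (Real.exp (φ x / t)) ∂ν) ≤ q)
    (c : ℝ) : (t : EReal) * ENNReal.log (ν {x | c < φ x}) ≤ ((q - c : ℝ) : EReal) := by
  rw [mul_log_le_coe_iff ht] at h ⊢
  set e : ℝ≥0∞ := ENNReal.ofReal (Real.exp (c / t))
  have he : e ≠ 0 := by simp [e, Real.exp_pos]
  have hmarkov : e * ν {x | c < φ x} ≤ ∫⁻ x, ENNReal.ofReal (Real.exp (φ x / t)) ∂ν := by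
    refine (mul_le_mul_right (measure_mono fun x hx => ?_) e).trans
      (mul_meas_ge_le_lintegral₀ (by fun_prop) e)
    exact ENNReal.ofReal_le_ofReal (Real.exp_le_exp.mpr (div_le_div_of_nonneg_right
      (le_of_lt hx) ht.le))
  refine (ENNReal.mul_le_mul_iff_right he ENNReal.ofReal_ne_top).mp (hmarkov.trans (h.trans ?_))
  rw [← ENNReal.ofReal_mul (Real.exp_pos _).le, ← Real.exp_add, sub_div, add_sub_cancel]

theorem limsup_mul_log_measure_lt_le {A X : Type*} {l : Filter A} [MeasurableSpace X]
    {ν : A → Measure X} {t : A → ℝ} (ht : ∀ α, 0 < t α) {φ : X → ℝ} (hφ : Measurable φ)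
    {q : ℝ} (h : limsup (fun α => (t α : EReal) *
      ENNReal.log (∫⁻ x, ENNReal.ofReal (Real.exp (φ x / t α)) ∂(ν α))) l ≤ q) (c : ℝ) :
    limsup (fun α => (t α : EReal) * ENNReal.log (ν α {x | c < φ x})) l ≤
      ((q - c : ℝ) : EReal) := by
  refine limsup_le_of_forall_coe_gt fun b hb => ?_
  have hqb : (q : EReal) < ((b + c : ℝ) : EReal) := by
    rw [EReal.coe_lt_coe_iff] at hb ⊢
    linarith
  filter_upwards [eventually_lt_of_limsup_lt (h.trans_lt hqb)] with α hα
  simpa using mul_log_measure_lt_le hφ.aemeasurable (ht α) hα.le c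

theorem limsup_mul_log_le_of_le_sum {A ι : Type*} {l : Filter A} {t : A → ℝ} (ht : ∀ α, 0 < t α)
    (htlim : Tendsto t l (𝓝 0)) {x : A → ℝ≥0∞} (s : Finset ι) (a : ι → A → ℝ≥0∞)
    (hx : ∀ α, x α ≤ ∑ i ∈ s, a i α) {b : EReal}
    (h : ∀ i ∈ s, limsup (fun α => (t α : EReal) * ENNReal.log (a i α)) l ≤ b) :
    limsup (fun α => (t α : EReal) * ENNReal.log (x α)) l ≤ b := by
  refine limsup_le_of_forall_coe_gt fun c hbc => ?_
  obtain ⟨c', hbc', hc'c⟩ := EReal.exists_between_coe_real hbc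
  have hterms : ∀ᶠ α in l, ∀ i ∈ s, (t α : EReal) * ENNReal.log (a i α) ≤ c' :=
    (eventually_all_finset s).mpr fun i hi =>
      (eventually_lt_of_limsup_lt ((h i hi).trans_lt hbc')).mono fun _ => le_of_lt
  -- `s.card + 1` rather than `s.card` keeps the logarithm finite when `s = ∅`.
  have hcount : ∀ᶠ α in l, t α * Real.log (s.card + 1) ≤ c - c' := by
    have := htlim.mul_const (Real.log (s.card + 1))
    rw [zero_mul] at this
    exact this.eventually_le_const (sub_pos.mpr (EReal.coe_lt_coe_iff.mp hc'c))
  filter_upwards [hterms, hcount] with α hterms hcount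
  simp only [mul_log_le_coe_iff (ht α)] at hterms ⊢
  calc x α ≤ ∑ i ∈ s, a i α := hx α
    _ ≤ s.card * ENNReal.ofReal (Real.exp (c' / t α)) := by
        simpa using Finset.sum_le_card_nsmul s _ _ hterms
    _ ≤ (s.card + 1 : ℝ≥0∞) * ENNReal.ofReal (Real.exp (c' / t α)) := by gcongr; simp
    _ = ENNReal.ofReal (Real.exp (Real.log (s.card + 1) + c' / t α)) := by
        rw [Real.exp_add, Real.exp_log (by positivity), ENNReal.ofReal_mul (by positivity)]
        norm_cast
    _ ≤ ENNReal.ofReal (Real.exp (c / t α)) := by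
        gcongr
        rw [le_div_iff₀ (ht α), add_mul, div_mul_cancel₀ _ (ht α).ne']
        linarith

section ContinuousFunctions

variable {Ω : Type*} [TopologicalSpace Ω] [CompactSpace Ω] [MeasurableSpace Ω]
  [OpensMeasurableSpace Ω]

theorem lipschitzWith_integral_continuousMap (μ : Measure Ω) [IsProbabilityMeasure μ] :
    LipschitzWith 1 fun g : C(Ω, ℝ) => ∫ x, g x ∂μ := by
  refine LipschitzWith.of_dist_le_mul fun g h => ?_
  have hint : ∀ f : C(Ω, ℝ), Integrable f μ := fun f =>
    (BoundedContinuousFunction.mkOfCompact f).integrable μ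
  rw [Real.dist_eq, ← integral_sub (hint g) (hint h), dist_eq_norm, NNReal.coe_one, one_mul]
  simpa using norm_integral_le_of_norm_le_const (μ := μ) (f := fun x => (g - h) x)
    (Eventually.of_forall fun x => (g - h).norm_coe_le_norm x)

theorem exists_finset_subset_cover_lt_integral {Q : C(Ω, ℝ) → ℝ} (hQ : Continuous Q)
    {C : Set C(Ω, ℝ)} (hC : Dense C) {K : Set (ProbabilityMeasure Ω)} (hK : IsCompact K) {L : ℝ}
    (hL : ∀ μ ∈ K,
      (L : EReal) < ⨆ g : C(Ω, ℝ), (((∫ x, g x ∂(μ : Measure Ω)) - Q g : ℝ) : EReal)) :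
    ∃ s : Finset C(Ω, ℝ), ↑s ⊆ C ∧
      K ⊆ ⋃ g ∈ s, {μ : ProbabilityMeasure Ω | L + Q g < ∫ x, g x ∂(μ : Measure Ω)} := by
  have hcover :
      K ⊆ ⋃ g ∈ C, {μ : ProbabilityMeasure Ω | L + Q g < ∫ x, g x ∂(μ : Measure Ω)} := by
    intro μ hμ
    obtain ⟨g₀, hg₀⟩ := lt_iSup_iff.mp (hL μ hμ)
    have hopen : IsOpen {g : C(Ω, ℝ) | L < (∫ x, g x ∂(μ : Measure Ω)) - Q g} :=
      isOpen_lt continuous_const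
        ((lipschitzWith_integral_continuousMap (μ : Measure Ω)).continuous.sub hQ)
    obtain ⟨g, hgC, hgV⟩ := hC.exists_mem_open hopen ⟨g₀, EReal.coe_lt_coe_iff.mp hg₀⟩
    exact Set.mem_biUnion hgC (show L + Q g < _ by linarith [show L < _ from hgV])
  obtain ⟨s, hsC, hsfin, hKs⟩ := hK.elim_finite_subcover_image (fun g _ =>
    isOpen_lt continuous_const (ProbabilityMeasure.continuous_integral_continuousMap g)) hcover
  exact ⟨hsfin.toFinset, by simpa using hsC, by simpa using hKs⟩

end ContinuousFunctions

theorem ldp_upper_bound_of_pressure_inequality_general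
    {Ω : Type*} [MetricSpace Ω] [CompactSpace Ω] [MeasurableSpace Ω] [BorelSpace Ω]
    [MeasurableSpace (ProbabilityMeasure Ω)] [BorelSpace (ProbabilityMeasure Ω)]
    {A : Type*} [Preorder A]
    (ν : A → Measure (ProbabilityMeasure Ω))
    (t : A → ℝ) (htpos : ∀ α, 0 < t α) (htlim : Tendsto t atTop (𝓝 0))
    (Q : C(Ω, ℝ) → ℝ) (hQcont : Continuous Q)
    (C : Set C(Ω, ℝ)) (hCdense : Dense C)
    (hub : ∀ g ∈ C,
      Filter.limsup
        (fun α => (t α : EReal) *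
          ENNReal.log (∫⁻ μ : ProbabilityMeasure Ω,
            ENNReal.ofReal (Real.exp ((∫ x, g x ∂(μ : Measure Ω)) / t α)) ∂(ν α)))
        Filter.atTop ≤ (Q g : EReal))
    (Qstar : ProbabilityMeasure Ω → EReal)
    (hQstar : ∀ μ : ProbabilityMeasure Ω,
      Qstar μ = ⨆ g : C(Ω, ℝ), (((∫ x, g x ∂(μ : Measure Ω)) - Q g : ℝ) : EReal)) :
    ∀ F : Set (ProbabilityMeasure Ω), IsClosed F →
      Filter.limsup (fun α => (t α : EReal) * ENNReal.log (ν α F)) Filter.atTop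
        ≤ -(⨅ μ ∈ F, Qstar μ) := by
  intro F hF
  refine EReal.le_of_forall_lt_iff_le.mp fun z hz => ?_
  obtain ⟨L, hzL, hLF⟩ := EReal.exists_between_coe_real (EReal.neg_lt_comm.mp hz)
  obtain ⟨s, hsC, hFs⟩ := exists_finset_subset_cover_lt_integral hQcont hCdense hF.isCompact
    fun μ hμ => hQstar μ ▸ hLF.trans_le (biInf_le Qstar hμ)
  calc _ ≤ ((-L : ℝ) : EReal) := by
        refine limsup_mul_log_le_of_le_sum htpos htlim s _
          (fun α => (measure_mono hFs).trans (measure_biUnion_finset_le s _)) fun g hg => ?_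
        simpa using limsup_mul_log_measure_lt_le htpos
          (ProbabilityMeasure.continuous_integral_continuousMap g).measurable (hub g (hsC hg))
          (L + Q g)
    _ ≤ z := by
        rw [← EReal.coe_neg, EReal.coe_lt_coe_iff] at hzL
        exact EReal.coe_le_coe_iff.mpr (by linarith)

/-- **Abstract large deviation upper bound** on the space of Borel probability measures of
a compact metric space `Ω` (with the weak* topology). If `Q : C(Ω,ℝ) → ℝ` is convex and
continuous for the supremum norm, and `limsup_α t_α log ∫ exp(μ(g)/t_α) dν_α(μ) ≤ Q(g)`
for every `g` in a dense subset of `C(Ω,ℝ)`, then for every closed set `F` of probability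
measures, `limsup_α t_α log ν_α(F) ≤ −inf_{μ ∈ F} Q*(μ)`, where
`Q*(μ) = sup_{g} (μ(g) − Q(g))` is the Legendre–Fenchel transform of `Q`. -/
theorem ldp_upper_bound_of_pressure_inequality
    {Ω : Type*} [MetricSpace Ω] [CompactSpace Ω] [MeasurableSpace Ω] [BorelSpace Ω]
    [MeasurableSpace (ProbabilityMeasure Ω)] [BorelSpace (ProbabilityMeasure Ω)]
    {A : Type*} [Preorder A] [IsDirected A (· ≤ ·)] [Nonempty A]
    (ν : A → Measure (ProbabilityMeasure Ω)) (hprob : ∀ α, IsProbabilityMeasure (ν α))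
    (t : A → ℝ) (htpos : ∀ α, 0 < t α) (htlim : Tendsto t atTop (𝓝 0))
    (Q : C(Ω, ℝ) → ℝ) (hQconv : ConvexOn ℝ Set.univ Q) (hQcont : Continuous Q)
    (C : Set C(Ω, ℝ)) (hCdense : Dense C)
    (hub : ∀ g ∈ C,
      Filter.limsup
        (fun α => (t α : EReal) *
          ENNReal.log (∫⁻ μ : ProbabilityMeasure Ω,
            ENNReal.ofReal (Real.exp ((∫ x, g x ∂(μ : Measure Ω)) / t α)) ∂(ν α)))
        Filter.atTop ≤ (Q g : EReal))
    (Qstar : ProbabilityMeasure Ω → EReal)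
    (hQstar : ∀ μ : ProbabilityMeasure Ω,
      Qstar μ = ⨆ g : C(Ω, ℝ), (((∫ x, g x ∂(μ : Measure Ω)) - Q g : ℝ) : EReal)) :
    ∀ F : Set (ProbabilityMeasure Ω), IsClosed F →
      Filter.limsup (fun α => (t α : EReal) * ENNReal.log (ν α F)) Filter.atTop
        ≤ -(⨅ μ ∈ F, Qstar μ) :=
  ldp_upper_bound_of_pressure_inequality_general ν t htpos htlim Q hQcont C hCdense hub Qstar hQstar
end

section
/- Let K be a compact metrizable topological space, let (ν_α)_{α∈A} be a net of Borel probability measures on K, let (t_α)_{α∈A} be a net of positive reals converging to 0, and let I : K → [0,+∞] be lower semicontinuous. Assume the large deviation upper bound: limsup_α t_α log ν_α(F) ≤ −inf_{x∈F} I(x) for every closed set F ⊆ K. If ν is a cluster point of the net (ν_α) in the topology of weak convergence of probability measures (i.e., some subnet of (ν_α) converges weakly to ν), then ν({x ∈ K : I(x) > 0}) = 0; equivalently, the topological support of ν is contained in the set {x ∈ K : I(x) = 0}. -/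
/-!
On a closed set `F` on which the rate function is positive, the upper bound forces
`t_α log ν_α(F)` to stay below a negative constant, so `ν_α(F) → 0` because `t_α → 0⁺`.
By compactness and lower semicontinuity this applies to every closed subset of the open set
`{I > 0}`. Squeezing an open set between a closed `F ⊆ {I > 0}` and its closure inside
`{I > 0}`, the portmanteau inequality for open sets gives `ν(F) = 0` for the cluster point `ν`,
and inner regularity gives `ν{I > 0} = 0`.
-/

open MeasureTheory Filter Topology
open scoped ENNReal

theorem ENNReal.tendsto_zero_of_limsup_mul_log_lt_zero {ι : Type*} {l : Filter ι}
    {a : ι → ℝ≥0∞} {t : ι → ℝ} (ht : ∀ i, 0 < t i) (ht0 : Tendsto t l (𝓝 0))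
    (h : limsup (fun i ↦ (t i : EReal) * log (a i)) l < 0) :
    Tendsto a l (𝓝 0) := by
  obtain ⟨x, hlim, hx⟩ := EReal.exists_between_coe_real h
  have hlog : Tendsto (fun i ↦ log (a i)) l (𝓝 ⊥) := by
    refine EReal.tendsto_nhds_bot_iff_real.2 fun y ↦ ?_
    have hty : ∀ᶠ i in l, x < t i * y :=
      (by simpa using ht0.mul_const y : Tendsto (fun i ↦ t i * y) l (𝓝 0)).eventually_const_lt
        (by exact_mod_cast hx)
    filter_upwards [eventually_lt_of_limsup_lt hlim, hty] with i hi hyi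
    refine lt_of_mul_lt_mul_left (a := (t i : EReal)) ?_ (by exact_mod_cast (ht i).le)
    exact hi.trans (by exact_mod_cast hyi)
  simpa [Function.comp_def] using (continuous_exp.tendsto ⊥).comp hlog

theorem IsCompact.lt_biInf_of_lowerSemicontinuousOn {α β : Type*} [TopologicalSpace α]
    [CompleteLinearOrder β] {s : Set α} {f : α → β} (hs : IsCompact s)
    (hf : LowerSemicontinuousOn f s) {c : β} (hc : c < ⊤) (hcf : ∀ x ∈ s, c < f x) :
    c < ⨅ x ∈ s, f x := by
  rcases s.eq_empty_or_nonempty with rfl | hne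
  · simpa using hc
  obtain ⟨a, ha, hmin⟩ := hf.exists_isMinOn hne hs
  exact (hcf a ha).trans_le (le_iInf₂ fun x hx ↦ hmin hx)

theorem MeasureTheory.ProbabilityMeasure.measure_eq_zero_of_tendsto_measure_closed_subset
    {Ω ι : Type*} {L : Filter ι} [L.NeBot] [MeasurableSpace Ω] [TopologicalSpace Ω]
    [TopologicalSpace.PseudoMetrizableSpace Ω] [BorelSpace Ω]
    {μ : ProbabilityMeasure Ω} {μs : ι → ProbabilityMeasure Ω} (hμs : Tendsto μs L (𝓝 μ))
    {G : Set Ω} (hG : IsOpen G)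
    (h : ∀ F, IsClosed F → F ⊆ G → Tendsto (fun i ↦ (μs i : Measure Ω) F) L (𝓝 0)) :
    (μ : Measure Ω) G = 0 := by
  rw [hG.measure_eq_iSup_isClosed]
  simp only [ENNReal.iSup_eq_zero]
  intro F hFG hF
  obtain ⟨V, hV, hFV, hVG⟩ := normal_exists_closure_subset hF hG hFG
  refine le_antisymm ?_ bot_le
  calc (μ : Measure Ω) F ≤ (μ : Measure Ω) V := measure_mono hFV
    _ ≤ L.liminf fun i ↦ (μs i : Measure Ω) V :=
      ProbabilityMeasure.le_liminf_measure_open_of_tendsto hμs hV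
    _ ≤ L.liminf fun i ↦ (μs i : Measure Ω) (closure V) :=
      liminf_le_liminf (.of_forall fun i ↦ measure_mono subset_closure)
    _ = 0 := (h _ isClosed_closure hVG).liminf_eq

theorem clusterPoint_supported_on_rate_zero_set_general
    {K : Type*} [TopologicalSpace K] [CompactSpace K] [TopologicalSpace.MetrizableSpace K]
    [MeasurableSpace K] [BorelSpace K]
    {A : Type*} [Preorder A]
    (ν : A → ProbabilityMeasure K)
    (t : A → ℝ) (htpos : ∀ α, 0 < t α) (htlim : Tendsto t atTop (𝓝 0))
    (I : K → EReal) (hIlsc : LowerSemicontinuous I)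
    (hub : ∀ F : Set K, IsClosed F →
      Filter.limsup (fun α => (t α : EReal) * ENNReal.log ((ν α : Measure K) F))
        Filter.atTop ≤ -(⨅ x ∈ F, I x))
    (νlim : ProbabilityMeasure K) (hcluster : MapClusterPt νlim atTop ν) :
    (νlim : Measure K) {x : K | 0 < I x} = 0 := by
  obtain ⟨U, hUle, hUlim⟩ := mapClusterPt_iff_ultrafilter.mp hcluster
  refine ProbabilityMeasure.measure_eq_zero_of_tendsto_measure_closed_subset hUlim
    (hIlsc.isOpen_preimage 0) fun F hF hFI ↦ ?_
  have hI : 0 < ⨅ x ∈ F, I x := hF.isCompact.lt_biInf_of_lowerSemicontinuousOn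
    (hIlsc.lowerSemicontinuousOn F) EReal.zero_lt_top hFI
  exact (ENNReal.tendsto_zero_of_limsup_mul_log_lt_zero htpos htlim
    ((hub F hF).trans_lt (EReal.neg_lt_zero.2 hI))).mono_left hUle

/-- If a net of Borel probability measures on a compact metrizable space satisfies the
large deviation upper bound with a lower semicontinuous `[0,+∞]`-valued rate function `I`,
then every cluster point `νlim` of the net (for the topology of weak convergence) gives
zero mass to the set where `I` is positive, i.e. its support is contained in the zero set
of `I`. -/
theorem clusterPoint_supported_on_rate_zero_set
    {K : Type*} [TopologicalSpace K] [CompactSpace K] [TopologicalSpace.MetrizableSpace K]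
    [MeasurableSpace K] [BorelSpace K]
    {A : Type*} [Preorder A] [IsDirected A (· ≤ ·)] [Nonempty A]
    (ν : A → ProbabilityMeasure K)
    (t : A → ℝ) (htpos : ∀ α, 0 < t α) (htlim : Tendsto t atTop (𝓝 0))
    (I : K → EReal) (hIpos : ∀ x, 0 ≤ I x) (hIlsc : LowerSemicontinuous I)
    (hub : ∀ F : Set K, IsClosed F →
      Filter.limsup (fun α => (t α : EReal) * ENNReal.log ((ν α : Measure K) F))
        Filter.atTop ≤ -(⨅ x ∈ F, I x))
    (νlim : ProbabilityMeasure K) (hcluster : MapClusterPt νlim atTop ν) :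
    (νlim : Measure K) {x : K | 0 < I x} = 0 :=
  clusterPoint_supported_on_rate_zero_set_general ν t htpos htlim I hIlsc hub νlim hcluster
end

section
/- Let X be a real Hausdorff topological vector space, let K ⊆ X be a compact convex metrizable subset with the subspace topology, let (ν_α)_{α∈A} be a net of Borel probability measures on K and (t_α)_{α∈A} a net of positive reals converging to 0, and suppose (ν_α) satisfies the large deviation principle on K with powers (t_α) and rate function I. Suppose there is a convex set M ⊆ K such that I = +∞ on K∖M and I is finite and affine on M, and let φ : X → ℝ be a continuous linear map. Then for every μ ∈ M there exists ε₀ > 0 such that for all ε with 0 < ε < ε₀, writing G_ε = { x ∈ K : |φ(x) − φ(μ)| > ε }, the limits lim_α t_α log ν_α(G_ε) and lim_α t_α log ν_α(cl_K(G_ε)) exist in [−∞,0] and lim_α t_α log ν_α(G_ε) = lim_α t_α log ν_α(cl_K(G_ε)) = −inf_{x∈G_ε} I(x) = −inf_{x∈cl_K(G_ε)} I(x) (these common values being −∞ when the infima are +∞). -/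
open MeasureTheory Filter Topology
open scoped ENNReal

/-- The large deviation principle on a subset `K` of `X` (with its subspace topology):
the rate function is `[0,+∞]`-valued and lower semicontinuous on `K`, and relatively
closed and relatively open subsets of `K` are used in the bounds. -/
def HasLDPOn {X A : Type*} [TopologicalSpace X] [MeasurableSpace X] [Preorder A]
    (ν : A → Measure X) (t : A → ℝ) (K : Set X) (I : X → EReal) : Prop :=
  (∀ x ∈ K, 0 ≤ I x) ∧ LowerSemicontinuousOn I K ∧
    (∀ F : Set X, F ⊆ K → (∃ F' : Set X, IsClosed F' ∧ F = F' ∩ K) →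
      Filter.limsup (fun α => (t α : EReal) * ENNReal.log (ν α F)) Filter.atTop
        ≤ -(⨅ x ∈ F, I x)) ∧
    (∀ G : Set X, G ⊆ K → (∃ U : Set X, IsOpen U ∧ G = U ∩ K) →
      -(⨅ x ∈ G, I x) ≤
        Filter.liminf (fun α => (t α : EReal) * ENNReal.log (ν α G)) Filter.atTop)

open Set

/-! For `ε` below both `sup_M (φ - φ μ)` and `sup_M (φ μ - φ)` (where positive), a point
`x ∈ M` on the boundary `|φ x - φ μ| = ε` is not extremal for `φ` on `M`: some `y ∈ M` lies
strictly further out on the same side, so the open segment from `x` to `y` lies in `G_ε`, and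
affinity of `I` along it makes `I x` a limit of values of `I` on `G_ε`. Off `M` the rate is `⊤`,
so `I` has the same infimum on `G_ε` and on its relative closure, and the LDP lower bound for
`G_ε` and upper bound for its closure squeeze both sequences to that value. -/

lemma exists_pos_forall_exists_lt_of_bddAbove {ι : Type*} {f : ι → ℝ} {s : Set ι}
    (hf : BddAbove (f '' s)) :
    ∃ ε₀ > 0, ∀ ε, 0 < ε → ε < ε₀ → ∀ x ∈ s, ε ≤ f x → ∃ y ∈ s, ε < f y := by
  by_cases hsup : 0 < sSup (f '' s)
  · refine ⟨_, hsup, fun ε _ hε x hx _ => ?_⟩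
    obtain ⟨_, ⟨y, hy, rfl⟩, hlt⟩ := exists_lt_of_lt_csSup (Nonempty.image f ⟨x, hx⟩) hε
    exact ⟨y, hy, hlt⟩
  · refine ⟨1, one_pos, fun ε hε _ x hx hle => absurd ?_ hsup⟩
    exact hε.trans_le (hle.trans (le_csSup hf ⟨x, hx, rfl⟩))

section AffineRate

variable {X : Type*} [AddCommGroup X] [Module ℝ X] {I : X → EReal} {M : Set X}

lemma biInf_le_of_combo_mem {S : Set X} (hIfin : ∀ x ∈ M, I x ≠ ⊤) (hIbot : ∀ x ∈ M, I x ≠ ⊥)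
    (hIaff : ∀ x ∈ M, ∀ y ∈ M, ∀ β : ℝ, 0 ≤ β → β ≤ 1 →
      I (β • x + (1 - β) • y) = (β : EReal) * I x + ((1 - β : ℝ) : EReal) * I y)
    {x y : X} (hx : x ∈ M) (hy : y ∈ M) (hS : ∀ β ∈ Ioo (0 : ℝ) 1, β • y + (1 - β) • x ∈ S) :
    ⨅ z ∈ S, I z ≤ I x := by
  obtain ⟨a, ha⟩ : ∃ a : ℝ, (a : EReal) = I x := ⟨_, EReal.coe_toReal (hIfin x hx) (hIbot x hx)⟩
  obtain ⟨b, hb⟩ : ∃ b : ℝ, (b : EReal) = I y := ⟨_, EReal.coe_toReal (hIfin y hy) (hIbot y hy)⟩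
  have hcombo : ∀ β ∈ Ioo (0 : ℝ) 1, ⨅ z ∈ S, I z ≤ ((β * b + (1 - β) * a : ℝ) : EReal) := by
    intro β hβ
    calc ⨅ z ∈ S, I z ≤ I (β • y + (1 - β) • x) := iInf₂_le _ (hS β hβ)
      _ = ((β * b + (1 - β) * a : ℝ) : EReal) := by
        rw [hIaff y hy x hx β hβ.1.le hβ.2.le, ← ha, ← hb]; norm_cast
  have htend :
      Tendsto (fun β : ℝ => ((β * b + (1 - β) * a : ℝ) : EReal)) (𝓝[>] 0) (𝓝 (a : EReal)) :=
    ((continuous_coe_real_ereal.comp (by fun_prop)).tendsto' 0 _ (by simp)).mono_left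
      nhdsWithin_le_nhds
  rw [← ha]
  exact ge_of_tendsto htend (mem_of_superset (Ioo_mem_nhdsGT one_pos) hcombo)

lemma exists_combo_mem_annulus [TopologicalSpace X] {K : Set X} (hKconv : Convex ℝ K)
    (hMK : M ⊆ K) (φ : X →L[ℝ] ℝ) {c ε : ℝ}
    (hout : ∀ x ∈ M, ε ≤ φ x - c → ∃ y ∈ M, ε < φ y - c)
    (hin : ∀ x ∈ M, ε ≤ c - φ x → ∃ y ∈ M, ε < c - φ y) {x : X} (hxM : x ∈ M)
    (hx : ε ≤ |φ x - c|) :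
    ∃ y ∈ M, ∀ β ∈ Ioo (0 : ℝ) 1, β • y + (1 - β) • x ∈ {z ∈ K | ε < |φ z - c|} := by
  have hK : ∀ y ∈ M, ∀ β ∈ Ioo (0 : ℝ) 1, β • y + (1 - β) • x ∈ K := fun y hyM β hβ =>
    hKconv (hMK hyM) (hMK hxM) hβ.1.le (by linarith [hβ.2]) (by ring)
  have hcombo : ∀ y : X, ∀ β : ℝ,
      φ (β • y + (1 - β) • x) - c = β * (φ y - c) + (1 - β) * (φ x - c) := fun y β => by
    simp only [map_add, map_smul, smul_eq_mul]; ring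
  rcases le_abs'.1 hx with hbelow | habove
  · obtain ⟨y, hyM, hy⟩ := hin x hxM (by linarith)
    refine ⟨y, hyM, fun β hβ => ⟨hK y hyM β hβ, ?_⟩⟩
    rw [hcombo]
    nlinarith [hβ.1, hβ.2, neg_abs_le (β * (φ y - c) + (1 - β) * (φ x - c))]
  · obtain ⟨y, hyM, hy⟩ := hout x hxM habove
    refine ⟨y, hyM, fun β hβ => ⟨hK y hyM β hβ, ?_⟩⟩
    rw [hcombo]
    nlinarith [hβ.1, hβ.2, le_abs_self (β * (φ y - c) + (1 - β) * (φ x - c))]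

lemma biInf_closure_inter_annulus_eq [TopologicalSpace X] {K : Set X} (hKconv : Convex ℝ K)
    (hMK : M ⊆ K) (hItop : ∀ x ∈ K \ M, I x = ⊤) (hIfin : ∀ x ∈ M, I x ≠ ⊤)
    (hIbot : ∀ x ∈ M, I x ≠ ⊥)
    (hIaff : ∀ x ∈ M, ∀ y ∈ M, ∀ β : ℝ, 0 ≤ β → β ≤ 1 →
      I (β • x + (1 - β) • y) = (β : EReal) * I x + ((1 - β : ℝ) : EReal) * I y)
    (φ : X →L[ℝ] ℝ) {c ε : ℝ}
    (hout : ∀ x ∈ M, ε ≤ φ x - c → ∃ y ∈ M, ε < φ y - c)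
    (hin : ∀ x ∈ M, ε ≤ c - φ x → ∃ y ∈ M, ε < c - φ y) :
    ⨅ x ∈ closure {x ∈ K | ε < |φ x - c|} ∩ K, I x = ⨅ x ∈ {x ∈ K | ε < |φ x - c|}, I x := by
  refine le_antisymm (biInf_mono fun x hx => ⟨subset_closure hx, hx.1⟩) ?_
  refine le_iInf₂ fun x ⟨hxcl, hxK⟩ => ?_
  by_cases hxM : x ∈ M
  · have hx : ε ≤ |φ x - c| :=
      closure_minimal (t := {z | ε ≤ |φ z - c|}) (fun z hz => hz.2.le)
        (isClosed_le continuous_const (by fun_prop)) hxcl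
    obtain ⟨y, hyM, hS⟩ := exists_combo_mem_annulus hKconv hMK φ hout hin hxM hx
    exact biInf_le_of_combo_mem hIfin hIbot hIaff hxM hyM hS
  · rw [hItop x ⟨hxK, hxM⟩]
    exact le_top

end AffineRate

lemma HasLDPOn.tendsto_of_biInf_eq {X A : Type*} [TopologicalSpace X] [MeasurableSpace X]
    [Preorder A] {ν : A → Measure X} {t : A → ℝ} {K : Set X} {I : X → EReal}
    (hLDP : HasLDPOn ν t K I) (ht : ∀ α, 0 ≤ t α) {G F : Set X} (hGF : G ⊆ F) (hFK : F ⊆ K)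
    (hG : ∃ U, IsOpen U ∧ G = U ∩ K) (hF : ∃ F', IsClosed F' ∧ F = F' ∩ K)
    (hI : ⨅ x ∈ F, I x = ⨅ x ∈ G, I x) :
    Tendsto (fun α => (t α : EReal) * ENNReal.log (ν α G)) atTop (𝓝 (-⨅ x ∈ G, I x)) ∧
      Tendsto (fun α => (t α : EReal) * ENNReal.log (ν α F)) atTop (𝓝 (-⨅ x ∈ G, I x)) := by
  have hmono : ∀ α, (t α : EReal) * ENNReal.log (ν α G) ≤ t α * ENNReal.log (ν α F) := fun α =>
    mul_le_mul_of_nonneg_left (ENNReal.log_monotone (measure_mono hGF)) (mod_cast ht α)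
  have hlower := hLDP.2.2.2 G (hGF.trans hFK) hG
  have hupper := hI ▸ hLDP.2.2.1 F hFK hF
  exact ⟨tendsto_of_le_liminf_of_limsup_le hlower
      ((limsup_le_limsup (.of_forall hmono)).trans hupper),
    tendsto_of_le_liminf_of_limsup_le (hlower.trans (liminf_le_liminf (.of_forall hmono))) hupper⟩

theorem ldp_limit_on_evaluation_annuli_general
    {X : Type*} [AddCommGroup X] [Module ℝ X] [TopologicalSpace X]
    [MeasurableSpace X]
    {A : Type*} [Preorder A]
    (K : Set X) (hKcomp : IsCompact K) (hKconv : Convex ℝ K)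
    (ν : A → Measure X)
    (t : A → ℝ) (htpos : ∀ α, 0 < t α)
    (I : X → EReal) (hLDP : HasLDPOn ν t K I)
    (M : Set X) (hMK : M ⊆ K)
    (hItop : ∀ x ∈ K \ M, I x = ⊤)
    (hIfin : ∀ x ∈ M, I x ≠ ⊤)
    (hIaff : ∀ x ∈ M, ∀ y ∈ M, ∀ β : ℝ, 0 ≤ β → β ≤ 1 →
      I (β • x + (1 - β) • y) = (β : EReal) * I x + ((1 - β : ℝ) : EReal) * I y)
    (φ : X →L[ℝ] ℝ)
    (μ : X) :
    ∃ ε₀ > (0 : ℝ), ∀ ε : ℝ, 0 < ε → ε < ε₀ →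
      ∃ l : EReal, l ≤ 0 ∧
        Tendsto (fun α => (t α : EReal) *
            ENNReal.log (ν α {x ∈ K | ε < |φ x - φ μ|})) atTop (𝓝 l) ∧
        Tendsto (fun α => (t α : EReal) *
            ENNReal.log (ν α (closure {x ∈ K | ε < |φ x - φ μ|} ∩ K))) atTop (𝓝 l) ∧
        l = -(⨅ x ∈ {x ∈ K | ε < |φ x - φ μ|}, I x) ∧
        l = -(⨅ x ∈ closure {x ∈ K | ε < |φ x - φ μ|} ∩ K, I x) := by
  obtain ⟨ε₁, hε₁, hout⟩ := exists_pos_forall_exists_lt_of_bddAbove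
    ((hKcomp.image (f := fun x => φ x - φ μ) (by fun_prop)).bddAbove.mono (image_mono hMK))
  obtain ⟨ε₂, hε₂, hin⟩ := exists_pos_forall_exists_lt_of_bddAbove
    ((hKcomp.image (f := fun x => φ μ - φ x) (by fun_prop)).bddAbove.mono (image_mono hMK))
  refine ⟨min ε₁ ε₂, lt_min hε₁ hε₂, fun ε hε hεε₀ => ?_⟩
  set G : Set X := {x ∈ K | ε < |φ x - φ μ|}
  have hinf : ⨅ x ∈ closure G ∩ K, I x = ⨅ x ∈ G, I x :=
    biInf_closure_inter_annulus_eq hKconv hMK hItop hIfin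
      (fun x hx => ne_bot_of_le_ne_bot EReal.zero_ne_bot (hLDP.1 x (hMK hx))) hIaff φ
      (hout ε hε (hεε₀.trans_le (min_le_left _ _))) (hin ε hε (hεε₀.trans_le (min_le_right _ _)))
  obtain ⟨hG, hF⟩ := hLDP.tendsto_of_biInf_eq (G := G) (F := closure G ∩ K) (htpos · |>.le)
    (fun x hx => ⟨subset_closure hx, hx.1⟩) inter_subset_right
    ⟨{x | ε < |φ x - φ μ|}, isOpen_lt continuous_const (by fun_prop), Set.ext fun _ => and_comm⟩
    ⟨_, isClosed_closure, rfl⟩ hinf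
  exact ⟨_, EReal.neg_le_zero.2 (le_iInf₂ fun x hx => hLDP.1 x hx.1), hG, hF, rfl, by rw [hinf]⟩

/-- Let `K` be a compact convex metrizable subset of a real Hausdorff topological vector
space, let the net `ν` of Borel probability measures on `K` satisfy the large deviation
principle with powers `t` and affine rate function `I` (equal to `+∞` off a convex set
`M ⊆ K`, finite and affine on `M`), and let `φ : X → ℝ` be continuous linear. Then for
every `μ ∈ M` and all sufficiently small `ε > 0`, with
`G_ε = { x ∈ K : |φ(x) − φ(μ)| > ε }`, the limits of `t_α log ν_α(G_ε)` and
`t_α log ν_α(cl_K G_ε)` exist in `[−∞,0]` and both equal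
`−inf_{G_ε} I = −inf_{cl_K G_ε} I`. -/
theorem ldp_limit_on_evaluation_annuli
    {X : Type*} [AddCommGroup X] [Module ℝ X] [TopologicalSpace X]
    [IsTopologicalAddGroup X] [ContinuousSMul ℝ X] [T2Space X]
    [MeasurableSpace X] [BorelSpace X]
    {A : Type*} [Preorder A] [IsDirected A (· ≤ ·)] [Nonempty A]
    (K : Set X) (hKcomp : IsCompact K) (hKconv : Convex ℝ K)
    (hKmetr : TopologicalSpace.MetrizableSpace K)
    (ν : A → Measure X) (hprob : ∀ α, IsProbabilityMeasure (ν α))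
    (hsupp : ∀ α, ν α K = 1)
    (t : A → ℝ) (htpos : ∀ α, 0 < t α) (htlim : Tendsto t atTop (𝓝 0))
    (I : X → EReal) (hLDP : HasLDPOn ν t K I)
    (M : Set X) (hMK : M ⊆ K) (hM : Convex ℝ M)
    (hItop : ∀ x ∈ K \ M, I x = ⊤)
    (hIfin : ∀ x ∈ M, I x ≠ ⊤)
    (hIaff : ∀ x ∈ M, ∀ y ∈ M, ∀ β : ℝ, 0 ≤ β → β ≤ 1 →
      I (β • x + (1 - β) • y) = (β : EReal) * I x + ((1 - β : ℝ) : EReal) * I y)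
    (φ : X →L[ℝ] ℝ)
    (μ : X) (hμ : μ ∈ M) :
    ∃ ε₀ > (0 : ℝ), ∀ ε : ℝ, 0 < ε → ε < ε₀ →
      ∃ l : EReal, l ≤ 0 ∧
        Tendsto (fun α => (t α : EReal) *
            ENNReal.log (ν α {x ∈ K | ε < |φ x - φ μ|})) atTop (𝓝 l) ∧
        Tendsto (fun α => (t α : EReal) *
            ENNReal.log (ν α (closure {x ∈ K | ε < |φ x - φ μ|} ∩ K))) atTop (𝓝 l) ∧
        l = -(⨅ x ∈ {x ∈ K | ε < |φ x - φ μ|}, I x) ∧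
        l = -(⨅ x ∈ closure {x ∈ K | ε < |φ x - φ μ|} ∩ K, I x) :=
  ldp_limit_on_evaluation_annuli_general K hKcomp hKconv ν t htpos I hLDP M hMK hItop hIfin hIaff φ
    μ
end
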